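/- arXiv:1309.3117 — 2 statements merged into one kernel-verified Lean document; each statement's English description precedes it below -/
import Mathlib

section
/- Let U ⊂ ℝ^n and V ⊂ ℝ^d be compact sets each containing 0 in its convex hull, and let Θ be the gauge function on ℝ^{n×d} of the set {u vᵀ : u ∈ U, v ∈ V}. Then for every X ∈ ℝ^{n×d}, Θ(X) equals each of the following (where all infima are over integers r ≥ 0 and finite decompositions X = Σ_{m=1}^r u_m v_mᵀ): (i) inf of (1/2) Σ_{m=1}^r (γ_U(u_m)² + γ_V(v_m)²); (ii) inf of Σ_{m=1}^r γ_U(u_m) γ_V(v_m); (iii) inf over decompositions with all u_m ∈ U of Σ_{m=1}^r γ_V(v_m); (iv) inf over decompositions with all v_m ∈ V of Σ_{m=1}^r γ_U(u_m). -/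
open Matrix Set ENNReal NNReal Pointwise

noncomputable section

/-- The closed convex hull of `C ∪ {0}`. -/
def cvx {E : Type*} [AddCommGroup E] [Module ℝ E] [TopologicalSpace E] (C : Set E) : Set E :=
  closure (convexHull ℝ (insert 0 C))

/-- The (possibly infinite) gauge of the closed convex hull of `C ∪ {0}`. -/
def gaugeE {E : Type*} [AddCommGroup E] [Module ℝ E] [TopologicalSpace E] (C : Set E) (x : E) :
    ℝ≥0∞ :=
  ⨅ (r : ℝ≥0) (_ : x ∈ (r : ℝ) • cvx C), (r : ℝ≥0∞)

/-- `Θ(X)`: the gauge of `{u vᵀ : u ∈ U, v ∈ V}`, as the infimum of `Σ λ_m` over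
decompositions `X = Σ λ_m u_m v_mᵀ`, `λ_m ≥ 0`, `u_m ∈ U`, `v_m ∈ V`. -/
def Theta {n d : ℕ} (U : Set (Fin n → ℝ)) (V : Set (Fin d → ℝ))
    (X : Matrix (Fin n) (Fin d) ℝ) : ℝ≥0∞ :=
  sInf {t : ℝ≥0∞ | ∃ (r : ℕ) (lam : Fin r → ℝ) (u : Fin r → Fin n → ℝ)
    (v : Fin r → Fin d → ℝ),
    (∀ m, 0 ≤ lam m) ∧ (∀ m, u m ∈ U) ∧ (∀ m, v m ∈ V) ∧
    X = ∑ m, lam m • vecMulVec (u m) (v m) ∧ t = ENNReal.ofReal (∑ m, lam m)}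

/-! The gauge `Θ` is subadditive, and by bilinearity the convex hull of `{u vᵀ : u ∈ U, v ∈ V}`
contains `p qᵀ` for all `p ∈ conv U`, `q ∈ conv V`. Since `U` and `V` are compact, so are their
convex hulls (Carathéodory), hence the gauges are attained: `u = γ_U(u) p` with `p ∈ conv U`.
Therefore `Θ(u vᵀ) ≤ γ_U(u) γ_V(v)`, and `Θ(Σ u_m v_mᵀ) ≤ Σ γ_U(u_m) γ_V(v_m)`, which bounds `Θ`
by each of the four infima (using `2ab ≤ a² + b²` and `γ ≤ 1` on `U`, `V`). Conversely, a
decomposition `X = Σ λ_m u_m v_mᵀ` gives the decompositions `(√λ_m u_m, √λ_m v_m)`,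
`(λ_m u_m, v_m)` and `(u_m, λ_m v_m)`, all of cost at most `Σ λ_m`. -/

theorem isCompact_convexHull {E : Type*} [AddCommGroup E] [Module ℝ E] [TopologicalSpace E]
    [ContinuousAdd E] [ContinuousSMul ℝ E] [FiniteDimensional ℝ E] {s : Set E}
    (hs : IsCompact s) : IsCompact (convexHull ℝ s) := by
  let N := Module.finrank ℝ E + 1
  let combo (k : ℕ) (p : (Fin k → ℝ) × (Fin k → E)) : E := ∑ i, p.1 i • p.2 i
  have hull_eq : convexHull ℝ s =
      ⋃ k ∈ Set.Iic N, combo k '' (stdSimplex ℝ (Fin k) ×ˢ Set.univ.pi fun _ => s) := by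
    refine Set.Subset.antisymm (fun x hx => ?_) (Set.iUnion₂_subset fun k _ => ?_)
    · obtain ⟨ι, _, z, w, hzs, hz, hw, hw₁, rfl⟩ := eq_pos_convex_span_of_mem_convexHull hx
      let e := Fintype.equivFin ι
      refine Set.mem_biUnion (x := Fintype.card ι) ?_ ⟨(w ∘ e.symm, z ∘ e.symm), ?_, ?_⟩
      · exact hz.card_le_finrank_succ.trans (Nat.succ_le_succ (Submodule.finrank_le _))
      · exact ⟨⟨fun i => (hw _).le, by simpa [Equiv.sum_comp] using hw₁⟩,
          fun i _ => hzs (Set.mem_range_self _)⟩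
      · exact Equiv.sum_comp e.symm fun i => w i • z i
    · rintro _ ⟨⟨w, z⟩, ⟨⟨hw, hw₁⟩, hz⟩, rfl⟩
      exact mem_convexHull_of_exists_fintype w z hw hw₁ (fun i => hz i trivial) rfl
  rw [hull_eq]
  exact (Set.finite_Iic N).isCompact_biUnion fun k _ =>
    ((isCompact_stdSimplex ℝ (Fin k)).prod (isCompact_univ_pi fun _ => hs)).image
      (by fun_prop)

section gaugeE

variable {E : Type*} [AddCommGroup E] [Module ℝ E] [TopologicalSpace E] {C : Set E} {x : E}

theorem subset_cvx : C ⊆ cvx C :=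
  fun _ hx => subset_closure (subset_convexHull ℝ _ (Set.mem_insert_of_mem _ hx))

theorem gaugeE_smul_le (hx : x ∈ C) {c : ℝ} (hc : 0 ≤ c) :
    gaugeE C (c • x) ≤ ENNReal.ofReal c :=
  iInf₂_le c.toNNReal <| by
    rw [Real.coe_toNNReal c hc]; exact Set.smul_mem_smul_set (subset_cvx hx)

theorem gaugeE_le_one (hx : x ∈ C) : gaugeE C x ≤ 1 := by
  simpa using gaugeE_smul_le hx zero_le_one

theorem exists_gaugeE_eq_smul [T2Space E] [ContinuousSMul ℝ E] (hC : IsCompact (cvx C))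
    (hx : gaugeE C x ≠ ⊤) :
    ∃ (a : ℝ≥0) (p : E), p ∈ cvx C ∧ x = (a : ℝ) • p ∧ gaugeE C x = a := by
  obtain ⟨r₀, hr₀⟩ : ∃ r₀ : ℝ≥0, x ∈ (r₀ : ℝ) • cvx C := by
    by_contra! h
    exact hx (by simp [gaugeE, h])
  -- the gauge is the least `r` over the compact set of representations `x = r • q`, `r ≤ r₀`
  let T : Set (ℝ≥0 × E) := (Set.Icc 0 r₀ ×ˢ cvx C) ∩ {q | (q.1 : ℝ) • q.2 = x}
  have hT : IsCompact T :=
    (isCompact_Icc.prod hC).inter_right (isClosed_eq (by fun_prop) continuous_const)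
  obtain ⟨p₀, hp₀, hx₀⟩ := hr₀
  obtain ⟨⟨a, p⟩, ⟨⟨-, hp⟩, rfl⟩, hmin⟩ :=
    hT.exists_isMinOn ⟨(r₀, p₀), ⟨⟨⟨zero_le, le_rfl⟩, hp₀⟩, hx₀⟩⟩ continuous_fst.continuousOn
  refine ⟨a, p, hp, rfl, le_antisymm (iInf₂_le a (Set.smul_mem_smul_set hp)) ?_⟩
  refine le_iInf₂ fun r ⟨q, hq, hrq⟩ => ENNReal.coe_le_coe.2 ?_
  by_cases hr : r ≤ r₀
  · exact isMinOn_iff.1 hmin (r, q) ⟨⟨⟨zero_le, hr⟩, hq⟩, hrq⟩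
  · exact (isMinOn_iff.1 hmin (r₀, p₀) ⟨⟨⟨zero_le, le_rfl⟩, hp₀⟩, hx₀⟩).trans (not_le.1 hr).le

end gaugeE

section FiniteDimensional

variable {E : Type*} [AddCommGroup E] [Module ℝ E] [TopologicalSpace E] [T2Space E]
  [ContinuousAdd E] [ContinuousSMul ℝ E] [FiniteDimensional ℝ E] {C : Set E} {x : E}

theorem cvx_eq_convexHull (hC : IsCompact C) (h0 : (0 : E) ∈ convexHull ℝ C) :
    cvx C = convexHull ℝ C := by
  have : convexHull ℝ (insert 0 C) = convexHull ℝ C :=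
    (convexHull_min (Set.insert_subset h0 (subset_convexHull ℝ C)) (convex_convexHull ℝ C)).antisymm
      (convexHull_mono (Set.subset_insert _ _))
  rw [cvx, this, (isCompact_convexHull hC).isClosed.closure_eq]

theorem exists_gaugeE_eq_smul_mem_convexHull (hC : IsCompact C) (h0 : (0 : E) ∈ convexHull ℝ C)
    (hx : gaugeE C x ≠ ⊤) :
    ∃ (a : ℝ≥0) (p : E), p ∈ convexHull ℝ C ∧ x = (a : ℝ) • p ∧ gaugeE C x = a := by
  rw [← cvx_eq_convexHull hC h0]
  exact exists_gaugeE_eq_smul (cvx_eq_convexHull hC h0 ▸ isCompact_convexHull hC) hx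

theorem eq_zero_of_gaugeE_eq_zero (hC : IsCompact C) (h0 : (0 : E) ∈ convexHull ℝ C)
    (hx : gaugeE C x = 0) : x = 0 := by
  obtain ⟨a, p, -, rfl, ha⟩ := exists_gaugeE_eq_smul_mem_convexHull hC h0 (hx ▸ ENNReal.zero_ne_top)
  rw [hx, eq_comm, ENNReal.coe_eq_zero] at ha
  simp [ha]

end FiniteDimensional

theorem LinearMap.apply_apply_mem_convexHull_image2 {𝕜 E F G : Type*} [CommSemiring 𝕜]
    [PartialOrder 𝕜] [AddCommMonoid E] [Module 𝕜 E] [AddCommMonoid F] [Module 𝕜 F]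
    [AddCommMonoid G] [Module 𝕜 G] (f : E →ₗ[𝕜] F →ₗ[𝕜] G) {s : Set E} {t : Set F} {x : E} {y : F}
    (hx : x ∈ convexHull 𝕜 s) (hy : y ∈ convexHull 𝕜 t) :
    f x y ∈ convexHull 𝕜 (Set.image2 (fun a b => f a b) s t) := by
  have hleft : ∀ b ∈ t, f x b ∈ convexHull 𝕜 (Set.image2 (fun a b => f a b) s t) := by
    intro b hb
    have := Set.mem_image_of_mem (f.flip b) hx
    rw [LinearMap.image_convexHull] at this
    have hsub : f.flip b '' s ⊆ Set.image2 (fun a b => f a b) s t := by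
      rintro _ ⟨a, ha, rfl⟩
      exact Set.mem_image2_of_mem ha hb
    exact convexHull_mono hsub this
  have := Set.mem_image_of_mem (f x) hy
  rw [LinearMap.image_convexHull] at this
  exact convexHull_min (Set.image_subset_iff.2 hleft) (convex_convexHull 𝕜 _) this

theorem ENNReal.two_mul_le_add_sq (a b : ℝ≥0∞) : 2 * a * b ≤ a ^ 2 + b ^ 2 := by
  rcases eq_or_ne a ⊤ with rfl | ha
  · simp
  rcases eq_or_ne b ⊤ with rfl | hb
  · simp
  lift a to ℝ≥0 using ha
  lift b to ℝ≥0 using hb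
  exact_mod_cast _root_.two_mul_le_add_sq a b

section Theta

variable {n d : ℕ} {U : Set (Fin n → ℝ)} {V : Set (Fin d → ℝ)}

theorem Theta_le_of_fintype {ι : Type*} [Fintype ι] (lam : ι → ℝ) (u : ι → Fin n → ℝ)
    (v : ι → Fin d → ℝ) (hlam : ∀ i, 0 ≤ lam i) (hu : ∀ i, u i ∈ U) (hv : ∀ i, v i ∈ V) :
    Theta U V (∑ i, lam i • vecMulVec (u i) (v i)) ≤ ENNReal.ofReal (∑ i, lam i) :=
  let e := Fintype.equivFin ι
  sInf_le ⟨_, lam ∘ e.symm, u ∘ e.symm, v ∘ e.symm, fun _ => hlam _, fun _ => hu _,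
    fun _ => hv _, (Equiv.sum_comp e.symm fun i => lam i • vecMulVec (u i) (v i)).symm,
    by rw [Function.comp_def, Equiv.sum_comp e.symm lam]⟩

theorem Theta_zero : Theta U V 0 = 0 := by
  refine le_antisymm ?_ bot_le
  simpa using Theta_le_of_fintype (U := U) (V := V) (fun _ : Fin 0 => 0) 0 0 nofun nofun nofun

theorem Theta_add_le (X Y : Matrix (Fin n) (Fin d) ℝ) :
    Theta U V (X + Y) ≤ Theta U V X + Theta U V Y := by
  show _ ≤ sInf _ + sInf _
  rw [sInf_eq_iInf, sInf_eq_iInf]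
  refine ENNReal.le_iInf₂_add_iInf₂ ?_
  rintro _ ⟨r₁, l₁, u₁, v₁, hl₁, hu₁, hv₁, rfl, rfl⟩ _ ⟨r₂, l₂, u₂, v₂, hl₂, hu₂, hv₂, rfl, rfl⟩
  have := Theta_le_of_fintype (Sum.elim l₁ l₂) (Sum.elim u₁ u₂) (Sum.elim v₁ v₂)
    (Sum.forall.2 ⟨hl₁, hl₂⟩) (Sum.forall.2 ⟨hu₁, hu₂⟩) (Sum.forall.2 ⟨hv₁, hv₂⟩)
  simp only [Fintype.sum_sum_type, Sum.elim_inl, Sum.elim_inr] at this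
  rwa [ENNReal.ofReal_add (Finset.sum_nonneg fun m _ => hl₁ m)
    (Finset.sum_nonneg fun m _ => hl₂ m)] at this

theorem Theta_sum_le {ι : Type*} (s : Finset ι) (A : ι → Matrix (Fin n) (Fin d) ℝ) :
    Theta U V (∑ i ∈ s, A i) ≤ ∑ i ∈ s, Theta U V (A i) :=
  Finset.le_sum_of_subadditive _ Theta_zero.le Theta_add_le s A

theorem Theta_smul_le {Y : Matrix (Fin n) (Fin d) ℝ}
    (hY : Y ∈ convexHull ℝ (Set.image2 vecMulVec U V)) (c : ℝ≥0) :
    Theta U V ((c : ℝ) • Y) ≤ c := by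
  obtain ⟨ι, _, w, z, hw, hw₁, hz, rfl⟩ := mem_convexHull_iff_exists_fintype.1 hY
  choose u hu v hv huv using hz
  have := Theta_le_of_fintype (fun i => c * w i) u v (fun i => mul_nonneg c.2 (hw i)) hu hv
  rw [← Finset.mul_sum, hw₁, mul_one, ENNReal.ofReal_coe_nnreal] at this
  simpa only [Finset.smul_sum, smul_smul, huv] using this

theorem Theta_vecMulVec_le (hU : IsCompact U) (hV : IsCompact V)
    (hU0 : (0 : Fin n → ℝ) ∈ convexHull ℝ U) (hV0 : (0 : Fin d → ℝ) ∈ convexHull ℝ V)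
    (u : Fin n → ℝ) (v : Fin d → ℝ) :
    Theta U V (vecMulVec u v) ≤ gaugeE U u * gaugeE V v := by
  by_cases hu0 : gaugeE U u = 0
  · simp [eq_zero_of_gaugeE_eq_zero hU hU0 hu0, Theta_zero]
  by_cases hv0 : gaugeE V v = 0
  · -- Mathlib's `vecMulVec_zero` only covers square index types
    have hv : vecMulVec u (0 : Fin d → ℝ) = 0 := map_zero (vecMulVecBilin ℝ ℝ u)
    simp [eq_zero_of_gaugeE_eq_zero hV hV0 hv0, hv, Theta_zero]
  by_cases htop : gaugeE U u = ⊤ ∨ gaugeE V v = ⊤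
  · obtain h | h := htop <;> simp [h, hu0, hv0]
  push Not at htop
  obtain ⟨a, p, hp, rfl, ha⟩ := exists_gaugeE_eq_smul_mem_convexHull hU hU0 htop.1
  obtain ⟨b, q, hq, rfl, hb⟩ := exists_gaugeE_eq_smul_mem_convexHull hV hV0 htop.2
  have hpq : vecMulVec p q ∈ convexHull ℝ (Set.image2 vecMulVec U V) := by
    simpa using (vecMulVecBilin ℝ ℝ).apply_apply_mem_convexHull_image2 hp hq
  rw [ha, hb, ← ENNReal.coe_mul, smul_vecMulVec, vecMulVec_smul, smul_smul, ← NNReal.coe_mul]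
  exact Theta_smul_le hpq _

theorem Theta_sum_vecMulVec_le (hU : IsCompact U) (hV : IsCompact V)
    (hU0 : (0 : Fin n → ℝ) ∈ convexHull ℝ U) (hV0 : (0 : Fin d → ℝ) ∈ convexHull ℝ V)
    {ι : Type*} [Fintype ι] (u : ι → Fin n → ℝ) (v : ι → Fin d → ℝ) :
    Theta U V (∑ i, vecMulVec (u i) (v i)) ≤ ∑ i, gaugeE U (u i) * gaugeE V (v i) :=
  (Theta_sum_le _ _).trans (Finset.sum_le_sum fun _ _ => Theta_vecMulVec_le hU hV hU0 hV0 _ _)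

theorem Theta_eq_sInf_sum_sq (hU : IsCompact U) (hV : IsCompact V)
    (hU0 : (0 : Fin n → ℝ) ∈ convexHull ℝ U) (hV0 : (0 : Fin d → ℝ) ∈ convexHull ℝ V)
    (X : Matrix (Fin n) (Fin d) ℝ) :
    Theta U V X =
      sInf {t : ℝ≥0∞ | ∃ (r : ℕ) (u : Fin r → Fin n → ℝ) (v : Fin r → Fin d → ℝ),
        X = ∑ m, vecMulVec (u m) (v m) ∧
        t = (∑ m, ((gaugeE U (u m)) ^ 2 + (gaugeE V (v m)) ^ 2)) / 2} := by
  refine le_antisymm (le_sInf ?_) (le_sInf ?_)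
  · rintro _ ⟨r, u, v, rfl, rfl⟩
    refine (Theta_sum_vecMulVec_le hU hV hU0 hV0 u v).trans ?_
    rw [ENNReal.le_div_iff_mul_le (by simp) (by simp), Finset.sum_mul]
    refine Finset.sum_le_sum fun m _ => ?_
    rw [mul_comm, ← mul_assoc]
    exact ENNReal.two_mul_le_add_sq _ _
  · rintro _ ⟨r, lam, u, v, hlam, hu, hv, rfl, rfl⟩
    refine sInf_le_of_le ⟨r, fun m => √(lam m) • u m, fun m => √(lam m) • v m, ?_, rfl⟩ ?_
    · simp [smul_vecMulVec, vecMulVec_smul, smul_smul, Real.mul_self_sqrt (hlam _)]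
    refine ENNReal.div_le_of_le_mul ?_
    rw [ENNReal.ofReal_sum_of_nonneg fun m _ => hlam m, Finset.sum_mul]
    refine Finset.sum_le_sum fun m _ => ?_
    calc gaugeE U (√(lam m) • u m) ^ 2 + gaugeE V (√(lam m) • v m) ^ 2
        ≤ ENNReal.ofReal √(lam m) ^ 2 + ENNReal.ofReal √(lam m) ^ 2 := by
          gcongr
          exacts [gaugeE_smul_le (hu m) (Real.sqrt_nonneg _),
            gaugeE_smul_le (hv m) (Real.sqrt_nonneg _)]
      _ = ENNReal.ofReal (lam m) * 2 := by
          rw [← ENNReal.ofReal_pow (Real.sqrt_nonneg _), Real.sq_sqrt (hlam m), ← two_mul,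
            mul_comm]

theorem Theta_eq_sInf_sum_mul (hU : IsCompact U) (hV : IsCompact V)
    (hU0 : (0 : Fin n → ℝ) ∈ convexHull ℝ U) (hV0 : (0 : Fin d → ℝ) ∈ convexHull ℝ V)
    (X : Matrix (Fin n) (Fin d) ℝ) :
    Theta U V X =
      sInf {t : ℝ≥0∞ | ∃ (r : ℕ) (u : Fin r → Fin n → ℝ) (v : Fin r → Fin d → ℝ),
        X = ∑ m, vecMulVec (u m) (v m) ∧
        t = ∑ m, gaugeE U (u m) * gaugeE V (v m)} := by
  refine le_antisymm (le_sInf ?_) (le_sInf ?_)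
  · rintro _ ⟨r, u, v, rfl, rfl⟩
    exact Theta_sum_vecMulVec_le hU hV hU0 hV0 u v
  · rintro _ ⟨r, lam, u, v, hlam, hu, hv, rfl, rfl⟩
    refine sInf_le_of_le ⟨r, fun m => lam m • u m, v, by simp [smul_vecMulVec], rfl⟩ ?_
    rw [ENNReal.ofReal_sum_of_nonneg fun m _ => hlam m]
    exact Finset.sum_le_sum fun m _ => by
      simpa using mul_le_mul' (gaugeE_smul_le (hu m) (hlam m)) (gaugeE_le_one (hv m))

theorem Theta_eq_sInf_sum_gaugeE_right (hU : IsCompact U) (hV : IsCompact V)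
    (hU0 : (0 : Fin n → ℝ) ∈ convexHull ℝ U) (hV0 : (0 : Fin d → ℝ) ∈ convexHull ℝ V)
    (X : Matrix (Fin n) (Fin d) ℝ) :
    Theta U V X =
      sInf {t : ℝ≥0∞ | ∃ (r : ℕ) (u : Fin r → Fin n → ℝ) (v : Fin r → Fin d → ℝ),
        (∀ m, u m ∈ U) ∧ X = ∑ m, vecMulVec (u m) (v m) ∧
        t = ∑ m, gaugeE V (v m)} := by
  refine le_antisymm (le_sInf ?_) (le_sInf ?_)
  · rintro _ ⟨r, u, v, hu, rfl, rfl⟩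
    refine (Theta_sum_vecMulVec_le hU hV hU0 hV0 u v).trans (Finset.sum_le_sum fun m _ => ?_)
    simpa using mul_le_mul_left (gaugeE_le_one (hu m)) _
  · rintro _ ⟨r, lam, u, v, hlam, hu, hv, rfl, rfl⟩
    refine sInf_le_of_le ⟨r, u, fun m => lam m • v m, hu, by simp [vecMulVec_smul], rfl⟩ ?_
    rw [ENNReal.ofReal_sum_of_nonneg fun m _ => hlam m]
    exact Finset.sum_le_sum fun m _ => gaugeE_smul_le (hv m) (hlam m)

theorem Theta_eq_sInf_sum_gaugeE_left (hU : IsCompact U) (hV : IsCompact V)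
    (hU0 : (0 : Fin n → ℝ) ∈ convexHull ℝ U) (hV0 : (0 : Fin d → ℝ) ∈ convexHull ℝ V)
    (X : Matrix (Fin n) (Fin d) ℝ) :
    Theta U V X =
      sInf {t : ℝ≥0∞ | ∃ (r : ℕ) (u : Fin r → Fin n → ℝ) (v : Fin r → Fin d → ℝ),
        (∀ m, v m ∈ V) ∧ X = ∑ m, vecMulVec (u m) (v m) ∧
        t = ∑ m, gaugeE U (u m)} := by
  refine le_antisymm (le_sInf ?_) (le_sInf ?_)
  · rintro _ ⟨r, u, v, hv, rfl, rfl⟩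
    refine (Theta_sum_vecMulVec_le hU hV hU0 hV0 u v).trans (Finset.sum_le_sum fun m _ => ?_)
    simpa using mul_le_mul_right (gaugeE_le_one (hv m)) _
  · rintro _ ⟨r, lam, u, v, hlam, hu, hv, rfl, rfl⟩
    refine sInf_le_of_le ⟨r, fun m => lam m • u m, v, hv, by simp [smul_vecMulVec], rfl⟩ ?_
    rw [ENNReal.ofReal_sum_of_nonneg fun m _ => hlam m]
    exact Finset.sum_le_sum fun m _ => gaugeE_smul_le (hu m) (hlam m)

end Theta

/-- For compact `U ⊂ ℝ^n`, `V ⊂ ℝ^d` containing `0` in their convex hulls, `Θ(X)` equals each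
of the four infima over finite decompositions `X = Σ u_m v_mᵀ`:
(i) of `(1/2) Σ (γ_U(u_m)² + γ_V(v_m)²)`; (ii) of `Σ γ_U(u_m) γ_V(v_m)`;
(iii) with `u_m ∈ U`, of `Σ γ_V(v_m)`; (iv) with `v_m ∈ V`, of `Σ γ_U(u_m)`. -/
theorem statement6 {n d : ℕ} (U : Set (Fin n → ℝ)) (V : Set (Fin d → ℝ))
    (hU : IsCompact U) (hV : IsCompact V)
    (hU0 : (0 : Fin n → ℝ) ∈ convexHull ℝ U) (hV0 : (0 : Fin d → ℝ) ∈ convexHull ℝ V)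
    (X : Matrix (Fin n) (Fin d) ℝ) :
    Theta U V X =
      sInf {t : ℝ≥0∞ | ∃ (r : ℕ) (u : Fin r → Fin n → ℝ) (v : Fin r → Fin d → ℝ),
        X = ∑ m, vecMulVec (u m) (v m) ∧
        t = (∑ m, ((gaugeE U (u m)) ^ 2 + (gaugeE V (v m)) ^ 2)) / 2} ∧
    Theta U V X =
      sInf {t : ℝ≥0∞ | ∃ (r : ℕ) (u : Fin r → Fin n → ℝ) (v : Fin r → Fin d → ℝ),
        X = ∑ m, vecMulVec (u m) (v m) ∧
        t = ∑ m, gaugeE U (u m) * gaugeE V (v m)} ∧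
    Theta U V X =
      sInf {t : ℝ≥0∞ | ∃ (r : ℕ) (u : Fin r → Fin n → ℝ) (v : Fin r → Fin d → ℝ),
        (∀ m, u m ∈ U) ∧ X = ∑ m, vecMulVec (u m) (v m) ∧
        t = ∑ m, gaugeE V (v m)} ∧
    Theta U V X =
      sInf {t : ℝ≥0∞ | ∃ (r : ℕ) (u : Fin r → Fin n → ℝ) (v : Fin r → Fin d → ℝ),
        (∀ m, v m ∈ V) ∧ X = ∑ m, vecMulVec (u m) (v m) ∧
        t = ∑ m, gaugeE U (u m)} := by
  exact ⟨Theta_eq_sInf_sum_sq hU hV hU0 hV0 X, Theta_eq_sInf_sum_mul hU hV hU0 hV0 X,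
    Theta_eq_sInf_sum_gaugeE_right hU hV hU0 hV0 X, Theta_eq_sInf_sum_gaugeE_left hU hV hU0 hV0 X⟩

end
end

section
/- Let U ⊂ ℝ^n and V ⊂ ℝ^d be compact sets each containing 0 in its convex hull, and let Θ be the gauge function on ℝ^{n×d} of {u vᵀ : u ∈ U, v ∈ V}. Then the polar gauge of Θ satisfies, for every Y ∈ ℝ^{n×d}: Θ°(Y) = max_{u ∈ U, v ∈ V} uᵀ Y v = max_{u ∈ U} γ_V°(Yᵀ u) = max_{v ∈ V} γ_U°(Y v) = max over {u : γ_U(u) ≤ 1} and {v : γ_V(v) ≤ 1} of uᵀ Y v. -/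
open Matrix Set ENNReal NNReal Pointwise

noncomputable section

/-- One-sided polar of a set of vectors. -/
def vpolar {d : ℕ} (C : Set (Fin d → ℝ)) : Set (Fin d → ℝ) :=
  {y | ∀ x ∈ C, x ⬝ᵥ y ≤ 1}

/-- One-sided polar of a set of rectangular matrices, with pairing `⟨X, Y⟩ = tr(Xᵀ Y)`. -/
def matPolar {n d : ℕ} (C : Set (Matrix (Fin n) (Fin d) ℝ)) :
    Set (Matrix (Fin n) (Fin d) ℝ) :=
  {Y | ∀ X ∈ C, (Xᵀ * Y).trace ≤ 1}

/-- The set `{u vᵀ : u ∈ U, v ∈ V}`. -/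
def dyads {n d : ℕ} (U : Set (Fin n → ℝ)) (V : Set (Fin d → ℝ)) :
    Set (Matrix (Fin n) (Fin d) ℝ) :=
  {M | ∃ u ∈ U, ∃ v ∈ V, M = vecMulVec u v}

/-! The polar of the dyads under the trace pairing is cut out by the linear conditions
`uᵀ Y v ≤ 1`, and the gauge of a set cut out by continuous linear conditions `φ a ≤ 1` is the
supremum of the positive parts of the `φ a`; this gives the first formula, and the next two by
recognising the inner suprema as gauges of one-sided polars. For the last one, the unit ball of
`gaugeE U` is `cvx U`, the closed convex hull of `U ∪ {0}`, and a continuous linear functional has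
the same positive supremum over `cvx U` as over `U`. -/

section Gauge

variable {E : Type*} [AddCommGroup E] [Module ℝ E] [TopologicalSpace E]

theorem cvx_eq_self {C : Set E} (hconv : Convex ℝ C) (hclosed : IsClosed C) (h0 : 0 ∈ C) :
    cvx C = C := by
  rw [cvx, insert_eq_self.2 h0, hconv.convexHull_eq, hclosed.closure_eq]

theorem gaugeE_le_one_of_mem {C : Set E} {x : E} (hx : x ∈ C) : gaugeE C x ≤ 1 := by
  have hx' : x ∈ ((1 : ℝ≥0) : ℝ) • cvx C := by
    rw [NNReal.coe_one, one_smul]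
    exact subset_closure (subset_convexHull ℝ _ (mem_insert_of_mem _ hx))
  exact (iInf₂_le (1 : ℝ≥0) hx').trans_eq ENNReal.coe_one

theorem mem_cvx_of_gaugeE_le_one [IsTopologicalAddGroup E] [ContinuousSMul ℝ E] {C : Set E}
    {x : E} (hx : gaugeE C x ≤ 1) : x ∈ cvx C := by
  have hconv : Convex ℝ (cvx C) := (convex_convexHull ℝ _).closure
  have h0 : (0 : E) ∈ cvx C := subset_closure (subset_convexHull ℝ _ (mem_insert _ _))
  -- `t • x ∈ cvx C` for `0 < t < 1`, and this condition on `t` is closed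
  have hIoo : Ioo (0 : ℝ) 1 ⊆ {t : ℝ | t • x ∈ cvx C} := by
    intro t ⟨ht0, ht1⟩
    have hlt : gaugeE C x < ((t⁻¹).toNNReal : ℝ≥0∞) := by
      refine hx.trans_lt ?_
      exact_mod_cast (Real.one_lt_toNNReal).2 (one_lt_inv₀ ht0 |>.2 ht1)
    obtain ⟨r, hr⟩ := iInf_lt_iff.1 hlt
    obtain ⟨⟨y, hy, hxy⟩, hrt⟩ := iInf_lt_iff.1 hr
    have hrt : (r : ℝ) ≤ t⁻¹ :=
      (Real.le_toNNReal_iff_coe_le (inv_nonneg.2 ht0.le)).1 (ENNReal.coe_lt_coe.1 hrt).le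
    rw [mem_ofPred, ← hxy, smul_smul]
    exact hconv.smul_mem_of_zero_mem h0 hy
      ⟨by positivity, by nlinarith [mul_inv_cancel₀ ht0.ne']⟩
  have hclosed : IsClosed {t : ℝ | t • x ∈ cvx C} :=
    isClosed_closure.preimage (continuous_id.smul continuous_const)
  have h1 : (1 : ℝ) ∈ closure (Ioo 0 1) := by simp [closure_Ioo zero_ne_one]
  simpa using hclosed.closure_subset_iff.2 hIoo h1

theorem gaugeE_setOf_forall_le_one {ι : Type*} (A : Set ι) (φ : ι → E →L[ℝ] ℝ) (x : E) :
    gaugeE {y | ∀ a ∈ A, φ a y ≤ 1} x = ⨆ a ∈ A, ENNReal.ofReal (φ a x) := by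
  set P := {y | ∀ a ∈ A, φ a y ≤ 1}
  have hP : P = ⋂ a ∈ A, {y | φ a y ≤ 1} := by ext; simp [P]
  have hcvx : cvx P = P := by
    refine cvx_eq_self ?_ ?_ (fun a _ => by simp)
    · rw [hP]
      exact convex_iInter₂ fun a _ => convex_halfSpace_le (φ a).isLinear 1
    · rw [hP]
      exact isClosed_biInter fun a _ => isClosed_le (φ a).continuous continuous_const
  simp only [gaugeE, hcvx]
  refine le_antisymm (le_of_forall_gt_imp_ge_of_dense fun c hc => ?_) ?_
  · induction c using ENNReal.recTopCoe with
    | top => exact le_top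
    | coe c =>
      have hc0 : (0 : ℝ) < c := by exact_mod_cast pos_of_gt hc
      refine iInf₂_le c ((mem_smul_set_iff_inv_smul_mem₀ hc0.ne' _ x).2 fun a ha => ?_)
      have hlt : ENNReal.ofReal (φ a x) < ENNReal.ofReal c := by
        rw [ENNReal.ofReal_coe_nnreal]
        exact (le_iSup₂ (f := fun a (_ : a ∈ A) => ENNReal.ofReal (φ a x)) a ha).trans_lt hc
      rw [map_smul, smul_eq_mul, inv_mul_le_iff₀ hc0, mul_one]
      exact ((ENNReal.ofReal_lt_ofReal_iff hc0).1 hlt).le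
  · refine le_iInf₂ fun r ⟨y, hy, hxy⟩ => iSup₂_le fun a ha => ?_
    rw [← hxy, map_smul, smul_eq_mul, ← ENNReal.ofReal_coe_nnreal]
    exact ENNReal.ofReal_le_ofReal (mul_le_of_le_one_right r.coe_nonneg (hy a ha))

theorem ofReal_le_biSup_of_mem_cvx (φ : E →L[ℝ] ℝ) {A : Set E} {x : E} (hx : x ∈ cvx A) :
    ENNReal.ofReal (φ x) ≤ ⨆ a ∈ A, ENNReal.ofReal (φ a) := by
  set S := ⨆ a ∈ A, ENNReal.ofReal (φ a)
  rcases eq_or_ne S ⊤ with hS | hS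
  · exact hS ▸ le_top
  have hsub : cvx A ⊆ {y | φ y ≤ S.toReal} := by
    refine closure_minimal (convexHull_min ?_ (convex_halfSpace_le φ.isLinear _))
      (isClosed_le φ.continuous continuous_const)
    rintro y (rfl | hy)
    · simp
    · exact (ENNReal.ofReal_le_iff_le_toReal hS).1
        (le_iSup₂ (f := fun a (_ : a ∈ A) => ENNReal.ofReal (φ a)) y hy)
  exact (ENNReal.ofReal_le_iff_le_toReal hS).2 (hsub hx)

theorem biSup_gaugeE_le_one_ofReal [IsTopologicalAddGroup E] [ContinuousSMul ℝ E]
    (φ : E →L[ℝ] ℝ) (A : Set E) :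
    ⨆ x ∈ {x | gaugeE A x ≤ 1}, ENNReal.ofReal (φ x) = ⨆ a ∈ A, ENNReal.ofReal (φ a) :=
  le_antisymm
    (iSup₂_le fun _ hx => ofReal_le_biSup_of_mem_cvx φ (mem_cvx_of_gaugeE_le_one hx))
    (biSup_mono fun _ => gaugeE_le_one_of_mem)

end Gauge

section Matrices

variable {n d : ℕ}

def dotProductCLM {ι : Type*} [Fintype ι] (a : ι → ℝ) : (ι → ℝ) →L[ℝ] ℝ :=
  LinearMap.toContinuousLinearMap (dotProductBilin ℝ ℝ a)

@[simp]
theorem dotProductCLM_apply {ι : Type*} [Fintype ι] (a w : ι → ℝ) :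
    dotProductCLM a w = a ⬝ᵥ w :=
  rfl

theorem gaugeE_vpolar (A : Set (Fin n → ℝ)) (w : Fin n → ℝ) :
    gaugeE (vpolar A) w = ⨆ a ∈ A, ENNReal.ofReal (a ⬝ᵥ w) :=
  gaugeE_setOf_forall_le_one A dotProductCLM w

theorem biSup_gaugeE_le_one_ofReal_dotProduct {ι : Type*} [Fintype ι] (A : Set (ι → ℝ))
    (w : ι → ℝ) :
    ⨆ x ∈ {x | gaugeE A x ≤ 1}, ENNReal.ofReal (x ⬝ᵥ w) = ⨆ a ∈ A, ENNReal.ofReal (a ⬝ᵥ w) := by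
  simpa only [dotProductCLM_apply, dotProduct_comm w] using
    biSup_gaugeE_le_one_ofReal (dotProductCLM w) A

theorem trace_transpose_vecMulVec_mul {R m k : Type*} [CommSemiring R] [Fintype m]
    [Fintype k] (u : m → R) (v : k → R) (Y : Matrix m k R) :
    ((vecMulVec u v)ᵀ * Y).trace = u ⬝ᵥ Y *ᵥ v := by
  rw [transpose_vecMulVec, vecMulVec_mul, trace_vecMulVec, dotProduct_comm, dotProduct_mulVec]

theorem gaugeE_matPolar_dyads (U : Set (Fin n → ℝ)) (V : Set (Fin d → ℝ))
    (Y : Matrix (Fin n) (Fin d) ℝ) :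
    gaugeE (matPolar (dyads U V)) Y = ⨆ u ∈ U, ⨆ v ∈ V, ENNReal.ofReal (u ⬝ᵥ Y *ᵥ v) := by
  have hdyads : dyads U V = image2 vecMulVec U V := by
    ext M; simp [dyads, eq_comm]
  let traceCLM (X : Matrix (Fin n) (Fin d) ℝ) : Matrix (Fin n) (Fin d) ℝ →L[ℝ] ℝ :=
    LinearMap.toContinuousLinearMap (traceLinearMap (Fin d) ℝ ℝ ∘ₗ mulLeftLinearMap (Fin d) ℝ Xᵀ)
  have hpolar : matPolar (dyads U V) = {Z | ∀ X ∈ dyads U V, traceCLM X Z ≤ 1} := rfl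
  rw [hpolar, gaugeE_setOf_forall_le_one, hdyads, iSup_image2]
  simp only [traceCLM, LinearMap.coe_toContinuousLinearMap', LinearMap.coe_comp,
    Function.comp_apply, mulLeftLinearMap_apply, traceLinearMap_apply,
    trace_transpose_vecMulVec_mul]

end Matrices

theorem statement7_general {n d : ℕ} (U : Set (Fin n → ℝ)) (V : Set (Fin d → ℝ))
    (Y : Matrix (Fin n) (Fin d) ℝ) :
    (gaugeE (matPolar (dyads U V)) Y
        = ⨆ u ∈ U, ⨆ v ∈ V, ENNReal.ofReal (u ⬝ᵥ Y.mulVec v)) ∧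
    (gaugeE (matPolar (dyads U V)) Y = ⨆ u ∈ U, gaugeE (vpolar V) (Yᵀ.mulVec u)) ∧
    (gaugeE (matPolar (dyads U V)) Y = ⨆ v ∈ V, gaugeE (vpolar U) (Y.mulVec v)) ∧
    (gaugeE (matPolar (dyads U V)) Y
        = ⨆ u ∈ {u | gaugeE U u ≤ 1}, ⨆ v ∈ {v | gaugeE V v ≤ 1},
            ENNReal.ofReal (u ⬝ᵥ Y.mulVec v)) := by
  have hswap : ∀ u v, u ⬝ᵥ Y *ᵥ v = v ⬝ᵥ Yᵀ *ᵥ u := fun u v => by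
    rw [mulVec_transpose, dotProduct_mulVec, dotProduct_comm]
  have hΘ := gaugeE_matPolar_dyads U V Y
  refine ⟨hΘ, ?_, ?_, ?_⟩
  · simp_rw [hΘ, gaugeE_vpolar, hswap]
  · simp_rw [hΘ, gaugeE_vpolar, iSup₂_comm (ι₁ := Fin n → ℝ)]
  · rw [hΘ]
    calc ⨆ u ∈ U, ⨆ v ∈ V, ENNReal.ofReal (u ⬝ᵥ Y *ᵥ v)
        = ⨆ v ∈ V, ⨆ u ∈ {u | gaugeE U u ≤ 1}, ENNReal.ofReal (u ⬝ᵥ Y *ᵥ v) := by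
          rw [iSup₂_comm]; simp_rw [biSup_gaugeE_le_one_ofReal_dotProduct]
      _ = ⨆ u ∈ {u | gaugeE U u ≤ 1}, ⨆ v ∈ V, ENNReal.ofReal (v ⬝ᵥ Yᵀ *ᵥ u) := by
          rw [iSup₂_comm]; simp_rw [hswap]
      _ = _ := by simp_rw [hswap, biSup_gaugeE_le_one_ofReal_dotProduct]

/-- For compact `U`, `V` containing `0` in their convex hulls, the polar gauge `Θ°` of the
gauge `Θ` of `{u vᵀ : u ∈ U, v ∈ V}` satisfies
`Θ°(Y) = max_{u ∈ U, v ∈ V} uᵀ Y v = max_{u ∈ U} γ_V°(Yᵀ u) = max_{v ∈ V} γ_U°(Y v)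
       = max_{γ_U(u) ≤ 1, γ_V(v) ≤ 1} uᵀ Y v`. -/
theorem statement7 {n d : ℕ} (U : Set (Fin n → ℝ)) (V : Set (Fin d → ℝ))
    (hU : IsCompact U) (hV : IsCompact V)
    (hU0 : (0 : Fin n → ℝ) ∈ convexHull ℝ U) (hV0 : (0 : Fin d → ℝ) ∈ convexHull ℝ V)
    (Y : Matrix (Fin n) (Fin d) ℝ) :
    (gaugeE (matPolar (dyads U V)) Y
        = ⨆ u ∈ U, ⨆ v ∈ V, ENNReal.ofReal (u ⬝ᵥ Y.mulVec v)) ∧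
    (gaugeE (matPolar (dyads U V)) Y = ⨆ u ∈ U, gaugeE (vpolar V) (Yᵀ.mulVec u)) ∧
    (gaugeE (matPolar (dyads U V)) Y = ⨆ v ∈ V, gaugeE (vpolar U) (Y.mulVec v)) ∧
    (gaugeE (matPolar (dyads U V)) Y
        = ⨆ u ∈ {u | gaugeE U u ≤ 1}, ⨆ v ∈ {v | gaugeE V v ≤ 1},
            ENNReal.ofReal (u ⬝ᵥ Y.mulVec v)) :=
  statement7_general U V Y

end
end
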